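/- arXiv:quant-ph/0407255 — 4 statements merged into one kernel-verified Lean document; each statement's English description precedes it below -/
import Mathlib

section
/- For every finite simple graph G and all vertices u, w ∈ V, the cluster-state stabilizer operators satisfy: K_u and K_w commute (K_u * K_w = K_w * K_u), each K_u is Hermitian (K_uᴴ = K_u), and each K_u squares to the identity (K_u * K_u = 1). -/
open Matrix

set_option linter.unusedSectionVars false

noncomputable section

namespace ClusterState


/-- The single-qubit Pauli `X` matrix. -/
def PX : Matrix (Fin 2) (Fin 2) ℂ := !![0, 1; 1, 0]

/-- The single-qubit Pauli `Z` matrix. -/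
def PZ : Matrix (Fin 2) (Fin 2) ℂ := !![1, 0; 0, -1]

variable {V : Type*} [Fintype V] [DecidableEq V]

/-- The one-qubit operator `M` acting on the tensor factor `u` of the
`|V|`-qubit space `(V → Fin 2)`, and the identity on all other factors. -/
def oneSite (u : V) (M : Matrix (Fin 2) (Fin 2) ℂ) :
    Matrix (V → Fin 2) (V → Fin 2) ℂ :=
  Matrix.of fun s t => if ∀ v, v ≠ u → s v = t v then M (s u) (t u) else 0

/-- Pauli `X` acting on tensor factor `u`. -/
def XAt (u : V) : Matrix (V → Fin 2) (V → Fin 2) ℂ := oneSite u PX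

/-- Pauli `Z` acting on tensor factor `u`. -/
def ZAt (u : V) : Matrix (V → Fin 2) (V → Fin 2) ℂ := oneSite u PZ

lemma fin2_cases : ∀ a : Fin 2, a = 0 ∨ a = 1 := by decide

lemma ZAt_eq_diagonal (u : V) :
    ZAt u = Matrix.diagonal fun s => if s u = 1 then (-1 : ℂ) else 1 := by
  funext s t
  simp only [ZAt, oneSite, Matrix.of_apply]
  by_cases hst : s = t
  · subst hst
    rw [Matrix.diagonal_apply_eq, if_pos fun v _ => rfl]
    rcases fin2_cases (s u) with h | h <;> rw [h] <;> norm_num [PZ]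
  · rw [Matrix.diagonal_apply_ne _ hst]
    by_cases h : ∀ v, v ≠ u → s v = t v
    · rw [if_pos h]
      have hsu : s u ≠ t u := by
        intro he
        exact hst (funext fun v => by
          by_cases hv : v = u
          · rw [hv]; exact he
          · exact h v hv)
      rcases fin2_cases (s u) with h1 | h1 <;> rcases fin2_cases (t u) with h2 | h2
      · exact absurd (h1.trans h2.symm) hsu
      · rw [h1, h2]; norm_num [PZ]
      · rw [h1, h2]; norm_num [PZ]
      · exact absurd (h1.trans h2.symm) hsu
    · rw [if_neg h]

lemma ZAt_commute (u w : V) : Commute (ZAt u) (ZAt w) := by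
  have : ZAt u * ZAt w = ZAt w * ZAt u := by
    rw [ZAt_eq_diagonal, ZAt_eq_diagonal, Matrix.diagonal_mul_diagonal,
      Matrix.diagonal_mul_diagonal]
    exact congrArg Matrix.diagonal (mul_comm _ _)
  exact this

/-- The product `∏_{u ∈ S} Z_u` of Pauli `Z` operators over a finite set of
sites (all factors commute). -/
def Zprod (S : Finset V) : Matrix (V → Fin 2) (V → Fin 2) ℂ :=
  S.noncommProd ZAt fun u _ w _ _ => ZAt_commute u w

/-- Flip the bit at site `u`. -/
def flip (u : V) (s : V → Fin 2) : V → Fin 2 := Function.update s u (s u + 1)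

lemma flip_apply_same (u : V) (s : V → Fin 2) : flip u s u = s u + 1 := by
  unfold flip; exact Function.update_self u (s u + 1) s

lemma flip_apply_ne (u v : V) (s : V → Fin 2) (h : v ≠ u) : flip u s v = s v := by
  unfold flip; exact Function.update_of_ne h (s u + 1) s

lemma XAt_apply (u : V) (s t : V → Fin 2) :
    XAt u s t = if t = flip u s then 1 else 0 := by
  simp only [XAt, oneSite, Matrix.of_apply]
  by_cases ht : t = flip u s
  · have hcond : ∀ v, v ≠ u → s v = t v := fun v hv => by
      rw [ht, flip_apply_ne u v s hv]
    rw [if_pos hcond, if_pos ht, ht, flip_apply_same]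
    rcases fin2_cases (s u) with h | h <;> rw [h]
    · have e : (0 : Fin 2) + 1 = 1 := rfl
      rw [e]; norm_num [PX]
    · have e : (1 : Fin 2) + 1 = 0 := rfl
      rw [e]; norm_num [PX]
  · rw [if_neg ht]
    by_cases h : ∀ v, v ≠ u → s v = t v
    · rw [if_pos h]
      have htu : t u ≠ s u + 1 := by
        intro he
        apply ht
        funext v
        by_cases hv : v = u
        · rw [hv, he, flip_apply_same]
        · rw [flip_apply_ne u v s hv]; exact (h v hv).symm
      have hts : t u = s u := by
        have key : ∀ a b : Fin 2, b ≠ a + 1 → b = a := by decide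
        exact key (s u) (t u) htu
      rw [hts]
      rcases fin2_cases (s u) with h1 | h1 <;> rw [h1] <;> norm_num [PX]
    · rw [if_neg h]

lemma XAt_mul_apply (u : V) (A : Matrix (V → Fin 2) (V → Fin 2) ℂ)
    (s t : V → Fin 2) : (XAt u * A) s t = A (flip u s) t := by
  rw [Matrix.mul_apply, Finset.sum_eq_single (flip u s)]
  · rw [XAt_apply, if_pos rfl, one_mul]
  · intro r _ hr
    rw [XAt_apply, if_neg hr, zero_mul]
  · intro h; exact absurd (Finset.mem_univ _) h

lemma flip_flip (u : V) (s : V → Fin 2) : flip u (flip u s) = s := by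
  funext v
  by_cases hv : v = u
  · rw [hv, flip_apply_same, flip_apply_same]
    have key : ∀ a : Fin 2, a + 1 + 1 = a := by decide
    exact key (s u)
  · rw [flip_apply_ne _ _ _ hv, flip_apply_ne _ _ _ hv]

lemma mul_XAt_apply (u : V) (A : Matrix (V → Fin 2) (V → Fin 2) ℂ)
    (s t : V → Fin 2) : (A * XAt u) s t = A s (flip u t) := by
  rw [Matrix.mul_apply, Finset.sum_eq_single (flip u t)]
  · rw [XAt_apply, if_pos (flip_flip u t).symm, mul_one]
  · intro r _ hr
    rw [XAt_apply, if_neg, mul_zero]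
    intro he
    exact hr (by rw [he, flip_flip])
  · intro h; exact absurd (Finset.mem_univ _) h

lemma flip_comm (u w : V) (s : V → Fin 2) :
    flip u (flip w s) = flip w (flip u s) := by
  rcases eq_or_ne u w with rfl | h
  · rfl
  · funext v
    by_cases hu : v = u
    · rw [hu, flip_apply_same, flip_apply_ne w u s h,
        flip_apply_ne w u (flip u s) h, flip_apply_same]
    · by_cases hw : v = w
      · rw [hw, flip_apply_ne u w (flip w s) (Ne.symm h), flip_apply_same,
          flip_apply_same, flip_apply_ne u w s (Ne.symm h)]
      · rw [flip_apply_ne u v (flip w s) hu, flip_apply_ne w v s hw,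
          flip_apply_ne w v (flip u s) hw, flip_apply_ne u v s hu]

lemma XAt_commute (u w : V) : Commute (XAt u) (XAt w) := by
  have : XAt u * XAt w = XAt w * XAt u := by
    funext s t
    rw [XAt_mul_apply, XAt_mul_apply, XAt_apply, XAt_apply, flip_comm w u s]
  exact this

/-- The product `∏_{u ∈ S} X_u` of Pauli `X` operators over a finite set of
sites (all factors commute). -/
def Xprod (S : Finset V) : Matrix (V → Fin 2) (V → Fin 2) ℂ :=
  S.noncommProd XAt fun u _ w _ _ => XAt_commute u w

/-- The cluster-state stabilizer operator `K_u = X_u * ∏_{v ∈ N(u)} Z_v`. -/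
def K (G : SimpleGraph V) [DecidableRel G.Adj] (u : V) :
    Matrix (V → Fin 2) (V → Fin 2) ℂ :=
  XAt u * Zprod (G.neighborFinset u)

/-- Product of a family of pairwise commuting elements over a finite set. -/
def cprod {α M : Type*} [Monoid M] (S : Finset α) (f : α → M)
    (h : ∀ u ∈ S, ∀ w ∈ S, Commute (f u) (f w)) : M :=
  S.noncommProd f fun u hu w hw _ => h u hu w hw


/-- The eigenvalue `∏_{v ∈ S} (-1)^{s v}` of `∏_{v ∈ S} Z_v` on the basis state `s`. -/
def zSign (S : Finset V) (s : V → Fin 2) : ℂ :=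
  ∏ v ∈ S, if s v = 1 then -1 else 1

lemma Zprod_eq_diagonal (S : Finset V) : Zprod S = diagonal (zSign S) := by
  have hZ : Zprod S =
      diagonalRingHom (V → Fin 2) ℂ (∏ v ∈ S, fun s => if s v = 1 then -1 else 1) := by
    rw [← Finset.noncommProd_eq_prod]
    refine Eq.trans ?_ (Finset.map_noncommProd _ _ _ _).symm
    exact Finset.noncommProd_congr rfl (fun v _ => ZAt_eq_diagonal v) _
  rw [hZ, diagonalRingHom_apply]
  congr 1
  ext s
  simp only [zSign, Finset.prod_apply]

lemma Zprod_commute (S T : Finset V) : Commute (Zprod S) (Zprod T) := by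
  rw [Zprod_eq_diagonal, Zprod_eq_diagonal]
  exact (Commute.all _ _).map (diagonalRingHom (V → Fin 2) ℂ)

lemma Zprod_mul_self (S : Finset V) : Zprod S * Zprod S = 1 := by
  rw [Zprod_eq_diagonal, diagonal_mul_diagonal, ← diagonal_one]
  congr 1
  ext s
  rw [zSign, ← Finset.prod_mul_distrib]
  exact Finset.prod_eq_one fun v _ => by split_ifs <;> norm_num

lemma Zprod_conjTranspose (S : Finset V) : (Zprod S)ᴴ = Zprod S := by
  rw [Zprod_eq_diagonal, diagonal_conjTranspose]
  congr 1
  ext s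
  simp only [Pi.star_apply, zSign, star_prod]
  exact Finset.prod_congr rfl fun v _ => by split_ifs <;> simp

lemma zSign_flip (S : Finset V) (u : V) (s : V → Fin 2) :
    zSign S (flip u s) = (if u ∈ S then -1 else 1) * zSign S s := by
  have hfactor : ∀ v, (if flip u s v = 1 then (-1 : ℂ) else 1) =
      (if v = u then -1 else 1) * (if s v = 1 then -1 else 1) := by
    intro v
    rcases eq_or_ne v u with rfl | hv
    · rw [flip_apply_same]
      rcases fin2_cases (s v) with h | h <;> simp [h]
    · simp [flip_apply_ne u v s hv, hv]
  simp only [zSign, hfactor, Finset.prod_mul_distrib, Finset.prod_ite_eq']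

lemma XAt_mul_self (u : V) : XAt u * XAt u = 1 := by
  ext s t
  rw [XAt_mul_apply, XAt_apply, flip_flip, one_apply]
  exact if_congr eq_comm rfl rfl

lemma XAt_conjTranspose (u : V) : (XAt u)ᴴ = XAt u := by
  ext s t
  have hflip : s = flip u t ↔ t = flip u s :=
    ⟨fun h => by rw [h, flip_flip], fun h => by rw [h, flip_flip]⟩
  rw [conjTranspose_apply, XAt_apply, XAt_apply]
  simp only [hflip, apply_ite star, star_one, star_zero]

lemma diagonal_mul_XAt (u : V) (d : (V → Fin 2) → ℂ) :
    diagonal d * XAt u = XAt u * diagonal (d ∘ flip u) := by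
  ext s t
  rw [mul_XAt_apply, XAt_mul_apply, diagonal_apply, diagonal_apply, Function.comp_apply,
    flip_flip]
  exact if_congr ⟨fun h => by rw [h, flip_flip], fun h => by rw [← h, flip_flip]⟩ rfl rfl

lemma Zprod_mul_XAt (S : Finset V) (u : V) :
    Zprod S * XAt u = (if u ∈ S then -1 else 1 : ℂ) • (XAt u * Zprod S) := by
  have hflip : zSign S ∘ flip u = (if u ∈ S then -1 else 1 : ℂ) • zSign S :=
    funext (zSign_flip S u)
  rw [Zprod_eq_diagonal, diagonal_mul_XAt, hflip, diagonal_smul, mul_smul_comm]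

variable (G : SimpleGraph V) [DecidableRel G.Adj]

lemma K_mul_K (u w : V) :
    K G u * K G w = (if w ∈ G.neighborFinset u then -1 else 1 : ℂ) •
      (XAt u * XAt w * (Zprod (G.neighborFinset u) * Zprod (G.neighborFinset w))) := by
  -- moving `X_w` left past the `Z`-string of `N(u)` is the only reordering that costs a sign
  simp only [K, mul_assoc, ← mul_assoc (Zprod _), Zprod_mul_XAt, smul_mul_assoc, mul_smul_comm]

lemma K_commute (u w : V) : Commute (K G u) (K G w) := by
  have hsign : w ∈ G.neighborFinset u ↔ u ∈ G.neighborFinset w := by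
    simp only [SimpleGraph.mem_neighborFinset, G.adj_comm]
  rw [Commute, SemiconjBy, K_mul_K, K_mul_K, (XAt_commute u w).eq,
    (Zprod_commute _ _).eq, if_congr hsign rfl rfl]

lemma K_conjTranspose (u : V) : (K G u)ᴴ = K G u := by
  rw [K, conjTranspose_mul, Zprod_conjTranspose, XAt_conjTranspose, Zprod_mul_XAt,
    if_neg (G.notMem_neighborFinset_self u), one_smul]

lemma K_mul_self (u : V) : K G u * K G u = 1 := by
  rw [K_mul_K, if_neg (G.notMem_neighborFinset_self u), one_smul, XAt_mul_self, Zprod_mul_self,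
    one_mul]

/-- the cluster-state stabilizers `K_u` pairwise commute, are
Hermitian, and square to the identity. -/
theorem cluster_stabilizers_commute_hermitian_involutive
    {V : Type*} [Fintype V] [DecidableEq V]
    (G : SimpleGraph V) [DecidableRel G.Adj] (u w : V) :
    K G u * K G w = K G w * K G u ∧ (K G u)ᴴ = K G u ∧ K G u * K G u = 1 :=
  ⟨(K_commute G u w).eq, K_conjTranspose G u, K_mul_self G u⟩

end ClusterState
end
end

section
/- For every finite simple graph G and every subset S ⊆ V, the product of cluster-state stabilizers over S equals a signed Pauli word: ∏_{u ∈ S} K_u = (−1)^{e(S)} · (∏_{u ∈ S} X_u) * (∏_{v ∈ V, |N(v) ∩ S| odd} Z_v), where e(S) is the number of edges of G with both endpoints in S. (All factors within each of the three products commute, so the products are well defined.) -/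
open Matrix

set_option linter.unusedSectionVars false

noncomputable section

/-!
Each operator here sends a basis state `|t⟩` to a multiple `f t • |t + a⟩` of a single basis
state, and such operators compose by adding the shifts and multiplying the phases. Multiplying in
the stabilizers one vertex at a time, `K_u = X_u Z_{N(u)}` contributes the shift `e_u`, adds the
indicator of `N(u)` to the `Z`-exponent, and, because `Z_{N(u)}` has to pass the `X`s of the
vertices already taken, the sign `(-1)^{|N(u) ∩ S|}`: these are exactly the new edges of
`S ∪ {u}`. Finally `Z_v` enters `|N(v) ∩ S|` times, i.e. once if that number is odd.
-/

open Finset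

namespace Matrix

section ShiftDiagonal

variable {ι R : Type*} [Fintype ι] [DecidableEq ι] [AddCommMonoid ι] [Semiring R]

/-- The operator `|t⟩ ↦ f t • |t + a⟩`. -/
def shiftDiagonal (a : ι) (f : ι → R) : Matrix ι ι R :=
  of fun s t => if s = t + a then f t else 0

theorem shiftDiagonal_zero (f : ι → R) : shiftDiagonal 0 f = diagonal f := by
  ext s t
  by_cases h : s = t <;> simp [shiftDiagonal, h]

theorem smul_shiftDiagonal (c : R) (a : ι) (f : ι → R) :
    c • shiftDiagonal a f = shiftDiagonal a fun t => c * f t := by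
  ext s t
  simp [shiftDiagonal]

theorem shiftDiagonal_mul_shiftDiagonal (a b : ι) (f g : ι → R) :
    shiftDiagonal a f * shiftDiagonal b g = shiftDiagonal (a + b) fun t => f (t + b) * g t := by
  ext s t
  rw [mul_apply, sum_eq_single (t + b)]
  · simp [shiftDiagonal, add_assoc, add_comm b a]
  · intro r _ hr
    simp [shiftDiagonal, hr]
  · simp

theorem noncommProd_shiftDiagonal_one {α : Type*} (S : Finset α) (a : α → ι) (h) :
    S.noncommProd (fun i => shiftDiagonal (a i) (1 : ι → R)) h
      = shiftDiagonal (∑ i ∈ S, a i) 1 := by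
  classical
  induction S using Finset.induction_on with
  | empty => simp [shiftDiagonal_zero]
  | insert i S hi ih =>
    rw [noncommProd_insert_of_notMem _ _ _ _ hi, ih, shiftDiagonal_mul_shiftDiagonal,
      sum_insert hi]
    simp only [Pi.one_apply, mul_one]
    rfl

end ShiftDiagonal

theorem noncommProd_diagonal {α ι R : Type*} [Fintype ι] [DecidableEq ι] [CommSemiring R]
    (S : Finset α) (d : α → ι → R) (h) :
    S.noncommProd (fun i => diagonal (d i)) h = diagonal (∏ i ∈ S, d i) := by
  rw [← noncommProd_eq_prod]
  exact (map_noncommProd S d _ (diagonalRingHom ι R)).symm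

end Matrix

theorem AddChar.map_sum_eq_prod {α A M : Type*} [AddCommMonoid A] [CommMonoid M]
    (ψ : AddChar A M) (S : Finset α) (f : α → A) :
    ψ (∑ i ∈ S, f i) = ∏ i ∈ S, ψ (f i) := by
  induction S using Finset.cons_induction with
  | empty => simp
  | cons i S hi ih => rw [sum_cons, prod_cons, map_add_eq_mul, ih]

namespace ClusterState

def signChar : AddChar (Fin 2) ℂ where
  toFun a := if a = 1 then -1 else 1
  map_zero_eq_one' := by simp
  map_add_eq_mul' a b := by fin_cases a <;> fin_cases b <;> simp

variable {V : Type*} [Fintype V] [DecidableEq V]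

theorem signChar_one : signChar 1 = -1 := rfl

theorem flip_eq_add_single (u : V) (s : V → Fin 2) : flip u s = s + Pi.single u 1 := by
  ext v
  by_cases hv : v = u
  · subst hv
    simp [flip_apply_same]
  · simp [flip_apply_ne u v s hv, hv]

theorem XAt_eq_shiftDiagonal (u : V) : XAt u = shiftDiagonal (Pi.single u 1) 1 := by
  have h_two : (Pi.single u 1 + Pi.single u 1 : V → Fin 2) = 0 := by
    rw [← Pi.single_add, show (1 + 1 : Fin 2) = 0 from rfl, Pi.single_zero]
  ext s t
  rw [XAt_apply, flip_eq_add_single]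
  simp only [shiftDiagonal, of_apply, Pi.one_apply]
  congr 1
  apply propext
  constructor <;> rintro rfl <;> rw [add_assoc, h_two, add_zero]

theorem Xprod_eq_shiftDiagonal (S : Finset V) :
    Xprod S = shiftDiagonal (∑ u ∈ S, Pi.single u 1) 1 :=
  (noncommProd_congr rfl (fun u _ => XAt_eq_shiftDiagonal u) _).trans
    (noncommProd_shiftDiagonal_one S _ _)

theorem ZAt_eq_diagonal_signChar (u : V) : ZAt u = diagonal fun s => signChar (s u) :=
  ZAt_eq_diagonal u

theorem Zprod_eq_diagonal_s1 (T : Finset V) :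
    Zprod T = diagonal fun t => signChar (∑ v ∈ T, t v) := by
  refine (noncommProd_congr rfl (fun v _ => ZAt_eq_diagonal_signChar v) _).trans
    ((noncommProd_diagonal _ _ _).trans ?_)
  congr 1
  funext t
  rw [Finset.prod_apply, AddChar.map_sum_eq_prod]

theorem K_eq_shiftDiagonal (G : SimpleGraph V) [DecidableRel G.Adj] (u : V) :
    K G u = shiftDiagonal (Pi.single u 1) fun t =>
      signChar (∑ v ∈ G.neighborFinset u, t v) := by
  rw [K, XAt_eq_shiftDiagonal, Zprod_eq_diagonal_s1, ← shiftDiagonal_zero,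
    shiftDiagonal_mul_shiftDiagonal, add_zero]
  simp only [Pi.one_apply, one_mul]

theorem card_edgeFinset_filter_mem_sym2_insert (G : SimpleGraph V) [DecidableRel G.Adj]
    {u : V} {S : Finset V} (hu : u ∉ S) :
    #(G.edgeFinset.filter fun e => e ∈ (insert u S).sym2)
      = #(G.edgeFinset.filter fun e => e ∈ S.sym2) + #(G.neighborFinset u ∩ S) := by
  have h_new : (G.edgeFinset.filter fun e => e ∈ (insert u S).image fun w => s(u, w))
      = (G.neighborFinset u ∩ S).image fun w => s(u, w) := by
    ext e
    simp only [mem_filter, mem_image, mem_insert, mem_inter, SimpleGraph.mem_edgeFinset,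
      SimpleGraph.mem_neighborFinset]
    constructor
    · rintro ⟨he, w, rfl | hw, rfl⟩
      · exact (G.irrefl he).elim
      · exact ⟨w, ⟨he, hw⟩, rfl⟩
    · rintro ⟨w, ⟨hadj, hw⟩, rfl⟩
      exact ⟨hadj, w, Or.inr hw, rfl⟩
  have h_disj : Disjoint (G.edgeFinset.filter fun e => e ∈ S.sym2)
      (G.edgeFinset.filter fun e => e ∈ (insert u S).image fun w => s(u, w)) := by
    rw [disjoint_filter]
    intro e _ heS he_new
    obtain ⟨w, -, rfl⟩ := mem_image.1 he_new
    exact hu (mem_sym2_iff.1 heS u (Sym2.mem_mk_left u w))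
  simp only [sym2_insert, mem_union, filter_or]
  rw [card_union_of_disjoint h_disj.symm, h_new, add_comm,
    card_image_of_injective _ fun _ _ h => Sym2.congr_right.1 h]

theorem card_neighborFinset_inter_insert (G : SimpleGraph V) [DecidableRel G.Adj]
    {u : V} {S : Finset V} (hu : u ∉ S) (v : V) :
    #(G.neighborFinset v ∩ insert u S)
      = #(G.neighborFinset v ∩ S) + if G.Adj u v then 1 else 0 := by
  by_cases h : G.Adj u v
  · rw [inter_insert_of_mem ((G.mem_neighborFinset v u).2 h.symm),
      card_insert_of_notMem fun h' => hu (mem_inter.1 h').2, if_pos h]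
  · rw [inter_insert_of_notMem fun h' => h ((G.mem_neighborFinset v u).1 h').symm,
      if_neg h, add_zero]

theorem nsmul_fin_two (n : ℕ) (x : Fin 2) : n • x = if Odd n then x else 0 := by
  induction n with
  | zero => simp
  | succ n ih =>
    rw [succ_nsmul, ih]
    by_cases h : Odd n
    · rw [if_pos h, if_neg fun h' => Nat.odd_add_one.1 h' h]
      fin_cases x <;> rfl
    · rw [if_neg h, if_pos (Nat.odd_add_one.2 h), zero_add]

theorem noncommProd_K_eq_shiftDiagonal (G : SimpleGraph V) [DecidableRel G.Adj] (S : Finset V)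
    (h) : S.noncommProd (K G) h = shiftDiagonal (∑ u ∈ S, Pi.single u 1) fun t =>
      signChar (#(G.edgeFinset.filter fun e => e ∈ S.sym2) • 1
        + ∑ v, #(G.neighborFinset v ∩ S) • t v) := by
  induction S using Finset.induction_on with
  | empty => simp [shiftDiagonal_zero]
  | insert u S hu ih =>
    rw [noncommProd_insert_of_notMem _ _ _ _ hu, ih, K_eq_shiftDiagonal,
      shiftDiagonal_mul_shiftDiagonal, sum_insert hu]
    congr 1
    funext t
    have h_flip : ∑ v ∈ G.neighborFinset u, (∑ w ∈ S, Pi.single w (1 : Fin 2)) v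
        = #(G.neighborFinset u ∩ S) • 1 := by
      simp only [Finset.sum_apply, sum_pi_single, sum_ite_mem, sum_const]
    have h_deg : ∑ v, #(G.neighborFinset v ∩ insert u S) • t v
        = ∑ v, #(G.neighborFinset v ∩ S) • t v + ∑ v ∈ G.neighborFinset u, t v := by
      rw [G.neighborFinset_eq_filter (v := u), sum_filter, ← sum_add_distrib]
      refine sum_congr rfl fun v _ => ?_
      rw [card_neighborFinset_inter_insert G hu, add_nsmul]
      split_ifs <;> simp
    rw [← AddChar.map_add_eq_mul]
    congr 1
    simp only [Pi.add_apply, sum_add_distrib]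
    rw [h_flip, h_deg, card_edgeFinset_filter_mem_sym2_insert G hu, add_nsmul]
    abel

/-- the product of cluster-state stabilizers over `S ⊆ V` equals the
signed Pauli word
`∏_{u ∈ S} K_u = (−1)^{e(S)} (∏_{u ∈ S} X_u) (∏_{v : |N(v) ∩ S| odd} Z_v)`,
where `e(S)` is the number of edges of `G` with both endpoints in `S`. -/
theorem prod_cluster_stabilizers_eq_signed_pauli_word
    {V : Type*} [Fintype V] [DecidableEq V]
    (G : SimpleGraph V) [DecidableRel G.Adj] (S : Finset V)
    (hK : ∀ u ∈ S, ∀ w ∈ S, Commute (K G u) (K G w)) :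
    cprod S (K G) hK
      = ((-1 : ℂ) ^ (G.edgeFinset.filter fun e => e ∈ S.sym2).card) •
          (Xprod S *
            Zprod (Finset.univ.filter fun v => Odd ((G.neighborFinset v ∩ S).card))) := by
  rw [Xprod_eq_shiftDiagonal, Zprod_eq_diagonal_s1, ← shiftDiagonal_zero,
    shiftDiagonal_mul_shiftDiagonal, add_zero, smul_shiftDiagonal]
  refine (noncommProd_K_eq_shiftDiagonal G S _).trans (congrArg _ (funext fun t => ?_))
  rw [AddChar.map_add_eq_mul, AddChar.map_nsmul_eq_pow, signChar_one, Pi.one_apply, one_mul,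
    sum_filter]
  simp only [nsmul_fin_two]

end ClusterState
end
end

section
/- Fix d ≥ 1 and let W = |0^{⊗d}⟩⟨0| + |1^{⊗d}⟩⟨1|. Then Wᴴ * (∏_{j ∈ Fin d} X_j) * W = X (single-qubit Pauli X), and for every nonempty proper subset S ⊊ Fin d, Wᴴ * (∏_{j ∈ S} X_j) * W = 0. -/
open Matrix

set_option linter.unusedSectionVars false

noncomputable section

namespace ClusterState


variable {V : Type*} [Fintype V] [DecidableEq V]

/-- The isometry `W = |0^{⊗d}⟩⟨0| + |1^{⊗d}⟩⟨1|` from one qubit into `d` qubits: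
`W(s, b) = 1` if `s` is the constant function with value `b`, and `0` otherwise. -/
def Wiso (d : ℕ) : Matrix (Fin d → Fin 2) (Fin 2) ℂ :=
  Matrix.of fun s b => if s = fun _ => b then 1 else 0

end ClusterState

/-! `∏_{j ∈ S} X_j` is the permutation matrix flipping the bits in `S`, and `Wᴴ A W` is the
block of `A` between the two constant bit strings. Flipping the bits of a constant string on
`S` yields a constant string only when `S = ∅` or `S = univ`; for `S = univ` it sends
`0^d ↦ 1^d ↦ 0^d`, which is `X`. -/

namespace ClusterState

variable {V : Type*} [DecidableEq V]

def flipSet (S : Finset V) (s : V → Fin 2) : V → Fin 2 :=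
  fun v => if v ∈ S then s v + 1 else s v

lemma flipSet_empty (s : V → Fin 2) : flipSet ∅ s = s := by
  funext v; simp [flipSet]

lemma flipSet_univ_const [Fintype V] (a : Fin 2) :
    flipSet Finset.univ (fun _ : V => a) = fun _ => a + 1 := by
  funext v; simp [flipSet]

lemma flipSet_const_ne_const {S : Finset V} {u w : V} (hu : u ∈ S) (hw : w ∉ S) (a b : Fin 2) :
    flipSet S (fun _ => a) ≠ fun _ => b := by
  intro h
  have hau : a + 1 = b := by simpa [flipSet, hu] using congrFun h u
  have haw : a = b := by simpa [flipSet, hw] using congrFun h w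
  rw [← haw] at hau
  simp at hau

lemma flipSet_flip [Fintype V] {u : V} {S : Finset V} (hu : u ∉ S) (s : V → Fin 2) :
    flipSet S (flip u s) = flipSet (insert u S) s := by
  funext v
  rcases eq_or_ne v u with rfl | hv
  · simp [flipSet, hu, flip_apply_same]
  · simp [flipSet, hv, flip_apply_ne u v s hv]

lemma Xprod_insert [Fintype V] {u : V} {S : Finset V} (hu : u ∉ S) :
    Xprod (insert u S) = XAt u * Xprod S :=
  Finset.noncommProd_insert_of_notMem _ _ _ _ hu

lemma Xprod_apply [Fintype V] (S : Finset V) (s t : V → Fin 2) :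
    Xprod S s t = if t = flipSet S s then 1 else 0 := by
  induction S using Finset.induction generalizing s with
  | empty =>
    rw [flipSet_empty, show Xprod (∅ : Finset V) = 1 from Finset.noncommProd_empty _ _]
    simp [Matrix.one_apply, eq_comm]
  | insert u S hu ih => rw [Xprod_insert hu, XAt_mul_apply, ih, flipSet_flip hu]

lemma conjTranspose_Wiso_mul_mul_Wiso_apply (d : ℕ)
    (A : Matrix (Fin d → Fin 2) (Fin d → Fin 2) ℂ) (a b : Fin 2) :
    ((Wiso d)ᴴ * A * Wiso d) a b = A (fun _ => a) (fun _ => b) := by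
  rw [Matrix.mul_apply, Finset.sum_eq_single (fun _ => b), Matrix.mul_apply,
    Finset.sum_eq_single (fun _ => a)]
  · simp [Wiso]
  · intro r _ hr; simp [Wiso, hr]
  · simp
  · intro r _ hr; simp [Wiso, hr]
  · simp

/-- `Wᴴ (∏_{j} X_j) W = X`, while `Wᴴ (∏_{j ∈ S} X_j) W = 0` for
every nonempty proper subset `S ⊊ Fin d`. -/
theorem Wiso_compress_X_products (d : ℕ) (hd : 1 ≤ d) :
    (Wiso d)ᴴ * Xprod (Finset.univ : Finset (Fin d)) * Wiso d = PX ∧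
    (∀ S : Finset (Fin d), S.Nonempty → S ≠ Finset.univ →
      (Wiso d)ᴴ * Xprod S * Wiso d = 0) := by
  refine ⟨?_, fun S ⟨u, hu⟩ hS => ?_⟩
  · have : Nonempty (Fin d) := ⟨⟨0, hd⟩⟩
    ext a b
    rw [conjTranspose_Wiso_mul_mul_Wiso_apply, Xprod_apply, flipSet_univ_const]
    simp only [funext_iff, forall_const]
    fin_cases a <;> fin_cases b <;> rfl
  · obtain ⟨w, hw⟩ : ∃ w, w ∉ S := by
      simpa [Finset.eq_univ_iff_forall] using hS
    ext a b
    rw [conjTranspose_Wiso_mul_mul_Wiso_apply, Xprod_apply,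
      if_neg (flipSet_const_ne_const hu hw a b).symm, Matrix.zero_apply]

end ClusterState
end
end

section
/- For every ω ∈ ℝ with 0 ≤ ω ≤ 1, the partial transpose ρ(ω)^{T₂} of the bond state ρ(ω) is positive semidefinite if and only if ω ≤ √2 − 1. -/
/-!
`X ⊗ Z` and `Z ⊗ X` are commuting Hermitian involutions whose product is `Y ⊗ Y`, and partial
transposition flips the sign of `Y ⊗ Y` only (`Yᵀ = -Y`, while `X` and `Z` are symmetric). Hence
`ρ(ω)^{T₂} = (1 + ω A + ω B - ω² AB) / 4` with `A = X ⊗ Z`, `B = Z ⊗ X`. On the joint eigenspaces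
of `A` and `B` it acts by `(1 + ω a + ω b - ω² ab) / 4`, `a, b = ±1`, i.e. by `(1 + 2ω - ω²) / 4`,
`(1 + ω²) / 4` and `(1 - 2ω - ω²) / 4`. For `ω ≥ 0` the last is the smallest, and it is
nonnegative exactly when `(1 + ω)² ≤ 2`; the eigenvector `(1, -1, -1, -1)` witnesses it.
-/

open Matrix Kronecker
open scoped ComplexOrder

noncomputable section

namespace ClusterState

/-- The single-qubit Pauli `Y` matrix. -/
def PY : Matrix (Fin 2) (Fin 2) ℂ := !![0, -Complex.I; Complex.I, 0]

/-- The bond state `ρ(ω) = (1/4)(1 + ω X⊗Z)(1 + ω Z⊗X)`. -/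
def bondState (ω : ℝ) : Matrix (Fin 2 × Fin 2) (Fin 2 × Fin 2) ℂ :=
  (4 : ℂ)⁻¹ • ((1 + ω • (PX ⊗ₖ PZ)) * (1 + ω • (PZ ⊗ₖ PX)))

/-- The partial transpose on the second tensor factor:
`M^{T₂}[(i,j),(k,l)] = M[(i,l),(k,j)]`. -/
def ptrans {n m : Type*} (M : Matrix (n × m) (n × m) ℂ) : Matrix (n × m) (n × m) ℂ :=
  Matrix.of fun p q => M (p.1, q.2) (q.1, p.2)

end ClusterState

/-- Expansion along the joint eigenprojections `(1 ± A)(1 ± B) / 4` of commuting involutions. -/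
lemma four_smul_one_add_add_add_eq {R : Type*} [Ring R] [Module ℝ R] (A B : R) (α β γ : ℝ) :
    (4 : ℝ) • (1 + α • A + β • B + γ • (A * B)) =
      (1 + α + β + γ) • ((1 + A) * (1 + B)) + (1 + α - β - γ) • ((1 + A) * (1 + -B)) +
      (1 - α + β - γ) • ((1 + -A) * (1 + B)) + (1 - α - β + γ) • ((1 + -A) * (1 + -B)) := by
  simp only [mul_add, add_mul, mul_neg, neg_mul, one_mul, mul_one]
  module

namespace Matrix

lemma IsHermitian.kronecker {R l m : Type*} [CommRing R] [StarRing R] {A : Matrix l l R}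
    {B : Matrix m m R} (hA : A.IsHermitian) (hB : B.IsHermitian) : (A ⊗ₖ B).IsHermitian := by
  rw [IsHermitian, conjTranspose_kronecker, hA.eq, hB.eq]

lemma kronecker_mul_kronecker_self {R l m : Type*} [CommSemiring R] [Fintype l] [Fintype m]
    [DecidableEq l] [DecidableEq m] {A : Matrix l l R} {B : Matrix m m R} (hA : A * A = 1)
    (hB : B * B = 1) : (A ⊗ₖ B) * (A ⊗ₖ B) = 1 := by
  rw [← mul_kronecker_mul, hA, hB, one_kronecker_one]

section RCLike

variable {𝕜 n : Type*} [RCLike 𝕜] [Fintype n]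

lemma PosSemidef.nonneg_of_mulVec_eq_smul {M : Matrix n n 𝕜} (hM : M.PosSemidef) {v : n → 𝕜}
    (hv : v ≠ 0) {c : ℝ} (hMv : M *ᵥ v = (c : 𝕜) • v) : 0 ≤ c := by
  have hq := hM.dotProduct_mulVec_nonneg v
  rw [hMv, dotProduct_smul, smul_eq_mul] at hq
  have hpos := (RCLike.pos_iff.1 (dotProduct_star_self_pos_iff.2 hv)).1
  have hre := (RCLike.nonneg_iff.1 hq).1
  rw [RCLike.re_ofReal_mul] at hre
  exact nonneg_of_mul_nonneg_left hre hpos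

variable [DecidableEq n]

lemma posSemidef_one_add_mul_one_add {A B : Matrix n n 𝕜} (hA : A.IsHermitian)
    (hB : B.IsHermitian) (hA2 : A * A = 1) (hB2 : B * B = 1) (hAB : Commute A B) :
    ((1 + A) * (1 + B)).PosSemidef := by
  have one_add_sq {C : Matrix n n 𝕜} (hC : C * C = 1) :
      (1 + C) * (1 + C) = (2 : ℝ) • (1 + C) := by
    simp only [mul_add, add_mul, one_mul, mul_one, hC]
    module
  have hcomm : Commute (1 + A) (1 + B) := by simp [hAB]
  have key : ((1 + A) * (1 + B))ᴴ * ((1 + A) * (1 + B)) = (4 : ℝ) • ((1 + A) * (1 + B)) := by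
    rw [conjTranspose_mul, conjTranspose_add, conjTranspose_add, conjTranspose_one, hA.eq, hB.eq,
      ← hcomm.eq, hcomm.symm.mul_mul_mul_comm, one_add_sq hA2, one_add_sq hB2, smul_mul_smul]
    norm_num
  have h := (posSemidef_conjTranspose_mul_self ((1 + A) * (1 + B))).smul
    (show (0 : ℝ) ≤ 4⁻¹ by norm_num)
  rwa [key, smul_smul, inv_mul_cancel₀ (by norm_num), one_smul] at h

lemma posSemidef_one_add_smul_add_smul_add_smul {A B : Matrix n n 𝕜} (hA : A.IsHermitian)
    (hB : B.IsHermitian) (hA2 : A * A = 1) (hB2 : B * B = 1) (hAB : Commute A B) {α β γ : ℝ}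
    (h₁ : 0 ≤ 1 + α + β + γ) (h₂ : 0 ≤ 1 + α - β - γ) (h₃ : 0 ≤ 1 - α + β - γ)
    (h₄ : 0 ≤ 1 - α - β + γ) :
    (1 + α • A + β • B + γ • (A * B)).PosSemidef := by
  have hA2' : -A * -A = 1 := by rw [neg_mul_neg, hA2]
  have hB2' : -B * -B = 1 := by rw [neg_mul_neg, hB2]
  have h := ((((posSemidef_one_add_mul_one_add hA hB hA2 hB2 hAB).smul h₁).add
    ((posSemidef_one_add_mul_one_add hA hB.neg hA2 hB2' hAB.neg_right).smul h₂)).add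
    ((posSemidef_one_add_mul_one_add hA.neg hB hA2' hB2 hAB.neg_left).smul h₃)).add
    ((posSemidef_one_add_mul_one_add hA.neg hB.neg hA2' hB2' hAB.neg_left.neg_right).smul h₄)
  rw [← four_smul_one_add_add_add_eq] at h
  simpa [smul_smul] using h.smul (show (0 : ℝ) ≤ 4⁻¹ by norm_num)

end RCLike

end Matrix

namespace ClusterState

section PartialTranspose

variable {n m : Type*}

lemma ptrans_add (M N : Matrix (n × m) (n × m) ℂ) : ptrans (M + N) = ptrans M + ptrans N := rfl

lemma ptrans_smul {R : Type*} [SMul R ℂ] (c : R) (M : Matrix (n × m) (n × m) ℂ) :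
    ptrans (c • M) = c • ptrans M := rfl

lemma ptrans_kronecker (A : Matrix n n ℂ) (B : Matrix m m ℂ) : ptrans (A ⊗ₖ B) = A ⊗ₖ Bᵀ := rfl

lemma ptrans_one [DecidableEq n] [DecidableEq m] :
    ptrans (1 : Matrix (n × m) (n × m) ℂ) = 1 := by
  rw [← one_kronecker_one, ptrans_kronecker, transpose_one]

end PartialTranspose

lemma PX_mul_self : PX * PX = 1 := by
  ext i j; fin_cases i <;> fin_cases j <;> simp [PX]

lemma PZ_mul_self : PZ * PZ = 1 := by
  ext i j; fin_cases i <;> fin_cases j <;> simp [PZ]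

lemma PZ_mul_PX : PZ * PX = -(PX * PZ) := by
  ext i j; fin_cases i <;> fin_cases j <;> simp [PX, PZ]

lemma PX_transpose : PXᵀ = PX := by
  ext i j; fin_cases i <;> fin_cases j <;> simp [PX]

lemma PZ_transpose : PZᵀ = PZ := by
  ext i j; fin_cases i <;> fin_cases j <;> simp [PZ]

lemma PX_isHermitian : PX.IsHermitian := by
  ext i j; fin_cases i <;> fin_cases j <;> simp [PX]

lemma PZ_isHermitian : PZ.IsHermitian := by
  ext i j; fin_cases i <;> fin_cases j <;> simp [PZ]

lemma commute_PX_kronecker_PZ : Commute (PX ⊗ₖ PZ) (PZ ⊗ₖ PX) := by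
  rw [Commute, SemiconjBy, ← mul_kronecker_mul, ← mul_kronecker_mul, PZ_mul_PX]
  ext; simp

lemma ptrans_bondState (ω : ℝ) : ptrans (bondState ω) =
    (4 : ℂ)⁻¹ • (1 + ω • (PX ⊗ₖ PZ) + ω • (PZ ⊗ₖ PX) + (-ω ^ 2) • ((PX ⊗ₖ PZ) * (PZ ⊗ₖ PX))) := by
  have hAB : ptrans ((PX ⊗ₖ PZ) * (PZ ⊗ₖ PX)) = -((PX ⊗ₖ PZ) * (PZ ⊗ₖ PX)) := by
    rw [← mul_kronecker_mul, ptrans_kronecker, transpose_mul, PX_transpose, PZ_transpose,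
      PZ_mul_PX]
    ext; simp
  have hexp : (1 + ω • (PX ⊗ₖ PZ)) * (1 + ω • (PZ ⊗ₖ PX)) =
      1 + ω • (PX ⊗ₖ PZ) + ω • (PZ ⊗ₖ PX) + ω ^ 2 • ((PX ⊗ₖ PZ) * (PZ ⊗ₖ PX)) := by
    simp only [mul_add, add_mul, one_mul, mul_one, smul_mul_smul, sq]
    abel
  rw [bondState, hexp, ptrans_smul, ptrans_add, ptrans_add, ptrans_add, ptrans_one, ptrans_smul,
    ptrans_smul, ptrans_smul, ptrans_kronecker, ptrans_kronecker, hAB, PX_transpose, PZ_transpose,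
    smul_neg, neg_smul]

def negEigvec : Fin 2 × Fin 2 → ℂ := fun p => !![1, -1; -1, -1] p.1 p.2

lemma negEigvec_ne_zero : negEigvec ≠ 0 := fun h => by
  simpa [negEigvec] using congrFun h (0, 0)

lemma PX_kronecker_PZ_mulVec_negEigvec : (PX ⊗ₖ PZ) *ᵥ negEigvec = -negEigvec := by
  ext ⟨i, j⟩
  fin_cases i <;> fin_cases j <;>
    simp [negEigvec, PX, PZ, mulVec, dotProduct, Fintype.sum_prod_type]

lemma PZ_kronecker_PX_mulVec_negEigvec : (PZ ⊗ₖ PX) *ᵥ negEigvec = -negEigvec := by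
  ext ⟨i, j⟩
  fin_cases i <;> fin_cases j <;>
    simp [negEigvec, PX, PZ, mulVec, dotProduct, Fintype.sum_prod_type]

lemma ptrans_bondState_mulVec_negEigvec (ω : ℝ) :
    ptrans (bondState ω) *ᵥ negEigvec = (((1 - 2 * ω - ω ^ 2) / 4 : ℝ) : ℂ) • negEigvec := by
  rw [ptrans_bondState]
  simp only [smul_mulVec, add_mulVec, one_mulVec, ← mulVec_mulVec,
    PX_kronecker_PZ_mulVec_negEigvec, PZ_kronecker_PX_mulVec_negEigvec, mulVec_neg]
  rw [Complex.coe_smul]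
  module

lemma le_sqrt_two_sub_one_iff {x : ℝ} (hx : -1 ≤ x) : x ≤ √2 - 1 ↔ 0 ≤ 1 - 2 * x - x ^ 2 := by
  rw [le_sub_iff_add_le, Real.le_sqrt (by linarith) zero_le_two]
  constructor <;> intro h <;> nlinarith

theorem bondState_ptrans_posSemidef_iff_general (ω : ℝ) (h0 : 0 ≤ ω) :
    (ptrans (bondState ω)).PosSemidef ↔ ω ≤ Real.sqrt 2 - 1 := by
  rw [le_sqrt_two_sub_one_iff (by linarith)]
  constructor
  · intro h
    have hc : 0 ≤ (1 - 2 * ω - ω ^ 2) / 4 :=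
      h.nonneg_of_mulVec_eq_smul negEigvec_ne_zero (ptrans_bondState_mulVec_negEigvec ω)
    linarith
  · intro h
    rw [ptrans_bondState]
    refine PosSemidef.smul (posSemidef_one_add_smul_add_smul_add_smul
      (PX_isHermitian.kronecker PZ_isHermitian) (PZ_isHermitian.kronecker PX_isHermitian)
      (kronecker_mul_kronecker_self PX_mul_self PZ_mul_self)
      (kronecker_mul_kronecker_self PZ_mul_self PX_mul_self) commute_PX_kronecker_PZ
      ?_ ?_ ?_ ?_) (by positivity)
    all_goals nlinarith

/-- for `0 ≤ ω ≤ 1`, the partial transpose of the bond state is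
positive semidefinite iff `ω ≤ √2 − 1`. -/
theorem bondState_ptrans_posSemidef_iff (ω : ℝ) (h0 : 0 ≤ ω) (h1 : ω ≤ 1) :
    (ptrans (bondState ω)).PosSemidef ↔ ω ≤ Real.sqrt 2 - 1 :=
  bondState_ptrans_posSemidef_iff_general ω h0

end ClusterState
end
end
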